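/- For R > 0, μ > 0, n ≥ 2, the top coefficient satisfies a_{n,n} ≥ exp{(n-1)[(1 + R max{1,μ}) ln(1 + 1/(R max{1,μ})) − 1]} = 1 + ν_n, where ν_n > 0. -/

import Mathlib

/-!
Since `0 < α_{k,n} ≤ c (n - 1)` with `c = R max{1, μ}`, each factor of `a_{n,n}` is at least
`1 + k / (c (n - 1))`. The logarithm of the resulting product is a Riemann sum of the increasing
function `t ↦ log (1 + t / a)`, `a = c (n - 1)`, and telescoping against its antiderivative
`(a + t) log (1 + t / a) - t` bounds it below by `(n - 1) ((1 + c) log (1 + 1/c) - 1)`;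
the increments are controlled by `x log (1 + 1/x) ≤ 1`. Positivity of `ν_n` is
`(1 + c) log (1 + 1/c) > 1`.
-/

open Matrix Finset

/-- `α_{k,n} = R (k + μ (n - k - 1))`. -/
noncomputable def alph (R mu : ℝ) (n k : ℕ) : ℝ := R * ((k : ℝ) + mu * ((n : ℝ) - (k : ℝ) - 1))

/-- `a_{j,n}`. -/
noncomputable def coefa (R mu : ℝ) (n j : ℕ) : ℝ :=
  (n.choose j : ℝ) * ∏ k ∈ Finset.range j, ((k : ℝ) + alph R mu n k) / alph R mu n k

/-- `Φ_n(X) = Σ_{j=0}^n a_{j,n} X₁^j X₂^{n-j}`. -/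
noncomputable def Phi (R mu : ℝ) (n : ℕ) (X : ℝ × ℝ) : ℝ :=
  ∑ j ∈ Finset.range (n + 1), coefa R mu n j * X.1 ^ j * X.2 ^ (n - j)

/-- first partial derivative of `Φ_n` in the first variable. -/
noncomputable def d1Phi (R mu : ℝ) (n : ℕ) (X : ℝ × ℝ) : ℝ :=
  deriv (fun t => Phi R mu n (t, X.2)) X.1

/-- first partial derivative of `Φ_n` in the second variable. -/
noncomputable def d2Phi (R mu : ℝ) (n : ℕ) (X : ℝ × ℝ) : ℝ :=
  deriv (fun t => Phi R mu n (X.1, t)) X.2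

/-- `∂₁²Φ_n`. -/
noncomputable def d11Phi (R mu : ℝ) (n : ℕ) (X : ℝ × ℝ) : ℝ :=
  deriv (fun t => d1Phi R mu n (t, X.2)) X.1

/-- `∂₁∂₂Φ_n`. -/
noncomputable def d12Phi (R mu : ℝ) (n : ℕ) (X : ℝ × ℝ) : ℝ :=
  deriv (fun t => d2Phi R mu n (t, X.2)) X.1

/-- `∂₂²Φ_n`. -/
noncomputable def d22Phi (R mu : ℝ) (n : ℕ) (X : ℝ × ℝ) : ℝ :=
  deriv (fun t => d2Phi R mu n (X.1, t)) X.2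

/-- The Hessian matrix `D²Φ_n(X)`. -/
noncomputable def hessPhi (R mu : ℝ) (n : ℕ) (X : ℝ × ℝ) : Matrix (Fin 2) (Fin 2) ℝ :=
  !![d11Phi R mu n X, d12Phi R mu n X; d12Phi R mu n X, d22Phi R mu n X]

/-- The mobility matrix `M(X)`. -/
noncomputable def mobM (R mu : ℝ) (X : ℝ × ℝ) : Matrix (Fin 2) (Fin 2) ℝ :=
  !![(1 + R) * X.1, R * X.1; mu * R * X.2, mu * R * X.2]

/-- The quantity `A_{j,k}`. -/
noncomputable def Acoef (R mu : ℝ) (n j k : ℕ) : ℝ :=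
  ((j : ℝ) + 2) * ((n : ℝ) - (k : ℝ)) * coefa R mu n (j + 2) * coefa R mu n k
    - ((n : ℝ) - (j : ℝ) - 1) * ((k : ℝ) + 1) * coefa R mu n (j + 1) * coefa R mu n (k + 1)

/-- `ν_n`. -/
noncomputable def nuc (R mu : ℝ) (n : ℕ) : ℝ :=
  Real.exp (((n : ℝ) - 1) * ((1 + R * max 1 mu) * Real.log (1 + 1 / (R * max 1 mu)) - 1)) - 1

open Real

lemma mul_log_one_add_one_div_le_one {x : ℝ} (hx : 0 < x) : x * log (1 + 1 / x) ≤ 1 := by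
  have h := log_le_sub_one_of_pos (by positivity : 0 < 1 + 1 / x)
  calc x * log (1 + 1 / x) ≤ x * (1 / x) := by gcongr; linarith
    _ = 1 := mul_one_div_cancel hx.ne'

lemma one_lt_one_add_mul_log_one_add_one_div {x : ℝ} (hx : 0 < x) :
    1 < (1 + x) * log (1 + 1 / x) := by
  have hy : 0 < 1 + 1 / x := by positivity
  have h := log_lt_sub_one_of_pos (inv_pos.2 hy) (by simp [hx.ne'])
  rw [log_inv] at h
  have : (1 + 1 / x)⁻¹ = x / (1 + x) := by field_simp; ring
  rw [this] at h
  have h1x : 0 < 1 + x := by linarith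
  calc (1 : ℝ) = (1 + x) * (1 - x / (1 + x)) := by field_simp; ring
    _ < (1 + x) * log (1 + 1 / x) := by gcongr; linarith

lemma sub_le_sum_range_log_one_add_div {a : ℝ} (ha : 0 < a) (m : ℕ) :
    (a + m) * log (1 + m / a) - m ≤ ∑ k ∈ Finset.range (m + 1), log (1 + k / a) := by
  induction m with
  | zero => simp
  | succ m ih =>
    have ham : 0 < a + m := by positivity
    have hsplit : 1 + ((m + 1 : ℕ) : ℝ) / a = (1 + m / a) * (1 + 1 / (a + m)) := by
      push_cast; field_simp; ring
    have hlog : log (1 + ((m + 1 : ℕ) : ℝ) / a) = log (1 + m / a) + log (1 + 1 / (a + m)) := by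
      rw [hsplit, log_mul (by positivity) (by positivity)]
    have := mul_log_one_add_one_div_le_one ham
    rw [Finset.sum_range_succ, hlog]
    push_cast at ih ⊢
    linarith

lemma exp_mul_le_prod_range_one_add_div {c : ℝ} (hc : 0 < c) {m : ℕ} (hm : 0 < m) :
    exp (m * ((1 + c) * log (1 + 1 / c) - 1)) ≤
      ∏ k ∈ Finset.range (m + 1), (1 + k / (c * m)) := by
  have hcm : 0 < c * m := by positivity
  have h := sub_le_sum_range_log_one_add_div hcm m
  have hform : (c * m + m) * log (1 + m / (c * m)) - m = m * ((1 + c) * log (1 + 1 / c) - 1) := by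
    rw [show (m : ℝ) / (c * m) = 1 / c by field_simp]
    ring
  rw [hform] at h
  calc exp (m * ((1 + c) * log (1 + 1 / c) - 1))
      ≤ exp (∑ k ∈ Finset.range (m + 1), log (1 + k / (c * m))) := exp_le_exp.2 h
    _ = ∏ k ∈ Finset.range (m + 1), (1 + k / (c * m)) := by
      rw [exp_sum]
      exact Finset.prod_congr rfl fun k _ => exp_log (by positivity)

lemma alph_pos {R mu : ℝ} (hR : 0 < R) (hmu : 0 < mu) {n k : ℕ} (hn : 2 ≤ n) (hk : k < n) :
    0 < alph R mu n k := by
  unfold alph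
  rcases Nat.eq_zero_or_pos k with rfl | hk0
  · have : (2 : ℝ) ≤ n := by exact_mod_cast hn
    simp only [Nat.cast_zero, zero_add, sub_zero]
    exact mul_pos hR (mul_pos hmu (by linarith))
  · have : (k : ℝ) + 1 ≤ n := by exact_mod_cast hk
    have : (0 : ℝ) < k := by exact_mod_cast hk0
    have : 0 ≤ mu * ((n : ℝ) - k - 1) := mul_nonneg hmu.le (by linarith)
    exact mul_pos hR (by linarith)

lemma alph_le {R mu : ℝ} (hR : 0 ≤ R) {n k : ℕ} (hk : k < n) :
    alph R mu n k ≤ R * max 1 mu * (n - 1) := by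
  have hkn : (k : ℝ) + 1 ≤ n := by exact_mod_cast hk
  have h1 : (k : ℝ) ≤ max 1 mu * k := le_mul_of_one_le_left k.cast_nonneg (le_max_left 1 mu)
  have h2 : mu * ((n : ℝ) - k - 1) ≤ max 1 mu * (n - k - 1) :=
    mul_le_mul_of_nonneg_right (le_max_right 1 mu) (by linarith)
  calc alph R mu n k = R * (k + mu * (n - k - 1)) := rfl
    _ ≤ R * (max 1 mu * k + max 1 mu * (n - k - 1)) := by gcongr
    _ = R * max 1 mu * (n - 1) := by ring

lemma prod_one_add_div_le_coefa_self {R mu : ℝ} (hR : 0 < R) (hmu : 0 < mu) {n : ℕ}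
    (hn : 2 ≤ n) :
    ∏ k ∈ Finset.range n, (1 + k / (R * max 1 mu * (n - 1))) ≤ coefa R mu n n := by
  have hN : (0 : ℝ) < n - 1 := by
    have : (2 : ℝ) ≤ n := by exact_mod_cast hn
    linarith
  rw [coefa, Nat.choose_self, Nat.cast_one, one_mul]
  refine Finset.prod_le_prod (fun k _ => ?_) fun k hk => ?_
  · positivity
  have hk := Finset.mem_range.1 hk
  have hα := alph_pos hR hmu hn hk
  rw [add_div, div_self hα.ne', add_comm _ (1 : ℝ)]
  gcongr
  exact alph_le hR.le hk

theorem stmt13 (R mu : ℝ) (hR : 0 < R) (hmu : 0 < mu) (n : ℕ) (hn : 2 ≤ n) :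
    coefa R mu n n
        ≥ Real.exp (((n : ℝ) - 1)
            * ((1 + R * max 1 mu) * Real.log (1 + 1 / (R * max 1 mu)) - 1)) ∧
    Real.exp (((n : ℝ) - 1)
        * ((1 + R * max 1 mu) * Real.log (1 + 1 / (R * max 1 mu)) - 1))
      = 1 + nuc R mu n ∧
    0 < nuc R mu n := by
  have hc : 0 < R * max 1 mu := by positivity
  obtain ⟨m, rfl⟩ : ∃ m, n = m + 1 := ⟨n - 1, by omega⟩
  have hm : 0 < m := by omega
  have hcast : ((m + 1 : ℕ) : ℝ) - 1 = m := by push_cast; ring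
  refine ⟨?_, by rw [nuc]; ring, ?_⟩
  · have := prod_one_add_div_le_coefa_self hR hmu hn
    rw [hcast] at this ⊢
    exact (exp_mul_le_prod_range_one_add_div hc hm).trans this
  · rw [nuc, sub_pos, hcast, one_lt_exp_iff]
    exact mul_pos (Nat.cast_pos.2 hm) (sub_pos.2 (one_lt_one_add_mul_log_one_add_one_div hc))
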